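/- arXiv:2602.12678 — 11 statements merged into one kernel-verified Lean document; each statement's English description precedes it below -/
import Mathlib

section
/- Let F : A → Set X be a soft set and τ a soft topology on F. Then for every t ∈ A the component family τ_t := { H t : H ∈ τ } is a topology on F t; that is, ∅ ∈ τ_t, F t ∈ τ_t, τ_t is closed under arbitrary unions of its members, and τ_t is closed under binary intersections of its members. -/
variable {A X : Type*}

/-- `H` is a soft subset of `F`: every section is contained in the corresponding section. -/
def SoftSubset (F H : A → Set X) : Prop := ∀ t, H t ⊆ F t

/-- `τ` is a soft topology on the soft set `F`. -/
def IsSoftTopology (F : A → Set X) (τ : Set (A → Set X)) : Prop :=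
  (∀ H ∈ τ, SoftSubset F H) ∧
  (fun _ : A => (∅ : Set X)) ∈ τ ∧
  F ∈ τ ∧
  (∀ S : Set (A → Set X), S ⊆ τ → (fun t => ⋃ H ∈ S, H t) ∈ τ) ∧
  (∀ H ∈ τ, ∀ K ∈ τ, (fun t => H t ∩ K t) ∈ τ)

/-- The component family `τ_t = { H t : H ∈ τ }`. -/
def compTop (τ : Set (A → Set X)) (t : A) : Set (Set X) := (fun H => H t) '' τ

/-- The set of soft elements of a soft set `F`. -/
def SE (F : A → Set X) : Set (A → X) := {a | ∀ t, a t ∈ F t}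

/-- Soft membership of a soft element in a soft set. -/
def memS (a : A → X) (H : A → Set X) : Prop := ∀ t, a t ∈ H t

/-- each component family of a soft topology is a topology on the section. -/
theorem componentFamily_isTopology [Nonempty A] [Nonempty X]
    (F : A → Set X) (τ : Set (A → Set X)) (hτ : IsSoftTopology F τ) (t : A) :
    (∅ : Set X) ∈ compTop τ t ∧
    F t ∈ compTop τ t ∧
    (∀ 𝒰 : Set (Set X), 𝒰 ⊆ compTop τ t → ⋃₀ 𝒰 ∈ compTop τ t) ∧
    (∀ U ∈ compTop τ t, ∀ V ∈ compTop τ t, U ∩ V ∈ compTop τ t) := by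
  obtain ⟨hsub, hempty, hF, hunion, hinter⟩ := hτ
  refine ⟨⟨_, hempty, rfl⟩, ⟨F, hF, rfl⟩, ?_, ?_⟩
  · intro 𝒰 h𝒰
    refine ⟨fun s => ⋃ H ∈ {H ∈ τ | H t ∈ 𝒰}, H s, hunion _ (fun H hH => hH.1), ?_⟩
    ext x
    simp only [Set.mem_iUnion, Set.mem_sUnion, Set.mem_setOf_eq]
    constructor
    · rintro ⟨H, ⟨-, hHt⟩, hx⟩
      exact ⟨H t, hHt, hx⟩
    · rintro ⟨U, hU, hx⟩
      obtain ⟨H, hHτ, rfl⟩ := h𝒰 hU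
      exact ⟨H, ⟨hHτ, hU⟩, hx⟩
  · rintro U ⟨H, hH, rfl⟩ V ⟨K, hK, rfl⟩
    exact ⟨_, hinter H hH K hK, rfl⟩
end

section
/- Let F : A → Set X be a soft set, τ a soft topology on F, and H ∈ τ with SE(H) ≠ ∅. Then for every t ∈ A, the section { a t : a ∈ SE(H) } equals H t, and consequently this section belongs to the component family τ_t. -/
variable {A X : Type*}

/-- the section of the soft-element set of a soft open set equals the section,
and hence belongs to the component family. -/
theorem section_of_SE_of_softOpen [Nonempty A] [Nonempty X]
    (F : A → Set X) (τ : Set (A → Set X)) (hτ : IsSoftTopology F τ)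
    (H : A → Set X) (hH : H ∈ τ) (hne : (SE H).Nonempty) (t : A) :
    (fun a : A → X => a t) '' SE H = H t ∧
    (fun a : A → X => a t) '' SE H ∈ compTop τ t := by
  classical
  obtain ⟨a, ha⟩ := hne
  have heq : (fun a : A → X => a t) '' SE H = H t := by
    apply Set.Subset.antisymm
    · rintro x ⟨b, hb, rfl⟩; exact hb t
    · intro x hx
      refine ⟨Function.update a t x, ?_, by simp⟩
      intro s
      by_cases hs : s = t
      · subst hs; simpa using hx
      · simpa [Function.update_of_ne hs] using ha s
  exact ⟨heq, heq ▸ ⟨H, hH, rfl⟩⟩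
end

section
/- Let (F, τ₁, τ₂) be a soft bitopological space over X with parameter set A such that F t is nonempty for every t ∈ A. If (F, τ₁, τ₂) is pairwise soft T0, then for every t ∈ A the bitopological space (F t, (τ₁)_t, (τ₂)_t) is pairwise T0: for all x, y ∈ F t with x ≠ y there exists U ∈ (τ₁)_t ∪ (τ₂)_t containing exactly one of x and y. -/
variable {A X : Type*}

/-- Pairwise soft T0. -/
def PairwiseSoftT0 {A X : Type*} (F : A → Set X) (τ1 τ2 : Set (A → Set X)) : Prop :=
  ∀ a ∈ SE F, ∀ b ∈ SE F, a ≠ b →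
    ∃ H ∈ τ1 ∪ τ2, (memS a H ∧ ¬ memS b H) ∨ (memS b H ∧ ¬ memS a H)

/-- Pairwise soft T1. -/
def PairwiseSoftT1 {A X : Type*} (F : A → Set X) (τ1 τ2 : Set (A → Set X)) : Prop :=
  ∀ a ∈ SE F, ∀ b ∈ SE F, a ≠ b →
    ∃ H ∈ τ1, ∃ K ∈ τ2, memS a H ∧ ¬ memS b H ∧ memS b K ∧ ¬ memS a K

/-- Pairwise soft T2 (pairwise soft Hausdorff). -/
def PairwiseSoftT2 {A X : Type*} (F : A → Set X) (τ1 τ2 : Set (A → Set X)) : Prop :=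
  ∀ a ∈ SE F, ∀ b ∈ SE F, a ≠ b →
    ∃ H ∈ τ1, ∃ K ∈ τ2, memS a H ∧ memS b K ∧ SE H ∩ SE K = ∅

/-- pairwise soft T0 implies each slice is pairwise T0. -/
theorem slices_pairwiseT0_of_pairwiseSoftT0 [Nonempty A] [Nonempty X]
    (F : A → Set X) (τ1 τ2 : Set (A → Set X))
    (h1 : IsSoftTopology F τ1) (h2 : IsSoftTopology F τ2)
    (hne : ∀ t, (F t).Nonempty) (h0 : PairwiseSoftT0 F τ1 τ2) (t : A) :
    ∀ x ∈ F t, ∀ y ∈ F t, x ≠ y →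
      ∃ U ∈ compTop τ1 t ∪ compTop τ2 t, (x ∈ U ∧ y ∉ U) ∨ (y ∈ U ∧ x ∉ U) := by
  intro x hx y hy hxy
  classical
  set c : A → X := fun s => (hne s).choose with hc
  have hcmem : ∀ s, c s ∈ F s := fun s => (hne s).choose_spec
  set a : A → X := fun s => if s = t then x else c s with ha
  set b : A → X := fun s => if s = t then y else c s with hb
  have haSE : a ∈ SE F := by
    intro s; by_cases h : s = t
    · subst h; simpa [ha] using hx
    · simpa [ha, h] using hcmem s
  have hbSE : b ∈ SE F := by
    intro s; by_cases h : s = t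
    · subst h; simpa [hb] using hy
    · simpa [hb, h] using hcmem s
  have hab : a ≠ b := by
    intro h
    apply hxy
    have := congrFun h t
    simpa [ha, hb] using this
  obtain ⟨H, hH, hsep⟩ := h0 a haSE b hbSE hab
  have hUmem : H t ∈ compTop τ1 t ∪ compTop τ2 t := by
    rcases hH with hH | hH
    · exact Or.inl ⟨H, hH, rfl⟩
    · exact Or.inr ⟨H, hH, rfl⟩
  refine ⟨H t, hUmem, ?_⟩
  have hat : a t = x := by simp [ha]
  have hbt : b t = y := by simp [hb]
  have key : ∀ (u v : A → X), (∀ s, s ≠ t → u s = v s) → memS u H → ¬ memS v H →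
      v t ∉ H t := by
    intro u v huv hu hv hvt
    apply hv
    intro s
    by_cases h : s = t
    · subst h; exact hvt
    · rw [← huv s h]; exact hu s
  have heq : ∀ s, s ≠ t → a s = b s := by
    intro s h; simp [ha, hb, h]
  rcases hsep with ⟨hu, hv⟩ | ⟨hu, hv⟩
  · left
    refine ⟨hat ▸ hu t, ?_⟩
    have := key a b heq hu hv
    rwa [hbt] at this
  · right
    refine ⟨hbt ▸ hu t, ?_⟩
    have := key b a (fun s h => (heq s h).symm) hu hv
    rwa [hat] at this
end

section
/- Let (F, τ₁, τ₂) be a soft bitopological space over X with parameter set A such that F t is nonempty for every t ∈ A. If (F, τ₁, τ₂) is pairwise soft T1, then for every t ∈ A the bitopological space (F t, (τ₁)_t, (τ₂)_t) is pairwise T1: for all x, y ∈ F t with x ≠ y there exist U ∈ (τ₁)_t and V ∈ (τ₂)_t with x ∈ U, y ∉ U, y ∈ V, x ∉ V. -/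
variable {A X : Type*}

/-- pairwise soft T1 implies each slice is pairwise T1. -/
theorem slices_pairwiseT1_of_pairwiseSoftT1 [Nonempty A] [Nonempty X]
    (F : A → Set X) (τ1 τ2 : Set (A → Set X))
    (h1 : IsSoftTopology F τ1) (h2 : IsSoftTopology F τ2)
    (hne : ∀ t, (F t).Nonempty) (hT1 : PairwiseSoftT1 F τ1 τ2) (t : A) :
    ∀ x ∈ F t, ∀ y ∈ F t, x ≠ y →
      ∃ U ∈ compTop τ1 t, ∃ V ∈ compTop τ2 t, x ∈ U ∧ y ∉ U ∧ y ∈ V ∧ x ∉ V := by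
  classical
  intro x hx y hy hxy
  set a : A → X := fun s => if s = t then x else (hne s).choose with ha
  set b : A → X := fun s => if s = t then y else (hne s).choose with hb
  have haF : a ∈ SE F := by
    intro s; by_cases h : s = t
    · subst h; simpa [ha] using hx
    · simpa [ha, h] using (hne s).choose_spec
  have hbF : b ∈ SE F := by
    intro s; by_cases h : s = t
    · subst h; simpa [hb] using hy
    · simpa [hb, h] using (hne s).choose_spec
  have hab : a ≠ b := by
    intro h
    apply hxy
    have := congrFun h t
    simpa [ha, hb] using this
  obtain ⟨H, hH, K, hK, haH, hbH, hbK, haK⟩ := hT1 a haF b hbF hab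
  refine ⟨H t, ⟨H, hH, rfl⟩, K t, ⟨K, hK, rfl⟩, ?_, ?_, ?_, ?_⟩
  · simpa [ha] using haH t
  · intro hyH
    apply hbH
    intro s
    by_cases h : s = t
    · subst h; simpa [hb] using hyH
    · have : a s ∈ H s := haH s
      simpa [ha, hb, h] using this
  · simpa [hb] using hbK t
  · intro hxK
    apply haK
    intro s
    by_cases h : s = t
    · subst h; simpa [ha] using hxK
    · have : b s ∈ K s := hbK s
      simpa [ha, hb, h] using this
end

section
/- Let (F, τ₁, τ₂) be a soft bitopological space over X with parameter set A such that F t is nonempty for every t ∈ A. If (F, τ₁, τ₂) is pairwise soft T2, then for every t ∈ A the bitopological space (F t, (τ₁)_t, (τ₂)_t) is pairwise T2: for all x, y ∈ F t with x ≠ y there exist U ∈ (τ₁)_t and V ∈ (τ₂)_t with x ∈ U, y ∈ V, and U ∩ V = ∅. -/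
variable {A X : Type*}

/-- pairwise soft T2 implies each slice is pairwise T2. -/
theorem slices_pairwiseT2_of_pairwiseSoftT2 [Nonempty A] [Nonempty X]
    (F : A → Set X) (τ1 τ2 : Set (A → Set X))
    (h1 : IsSoftTopology F τ1) (h2 : IsSoftTopology F τ2)
    (hne : ∀ t, (F t).Nonempty) (hT2 : PairwiseSoftT2 F τ1 τ2) (t : A) :
    ∀ x ∈ F t, ∀ y ∈ F t, x ≠ y →
      ∃ U ∈ compTop τ1 t, ∃ V ∈ compTop τ2 t, x ∈ U ∧ y ∈ V ∧ U ∩ V = ∅ := by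
  classical
  intro x hx y hy hxy
  set c : A → X := fun s => (hne s).choose with hc
  have hcF : ∀ s, c s ∈ F s := fun s => (hne s).choose_spec
  set a : A → X := Function.update c t x with ha
  set b : A → X := Function.update c t y with hb
  have haF : a ∈ SE F := by
    intro s
    by_cases h : s = t
    · subst h; simpa [ha, Function.update_self] using hx
    · simpa [ha, Function.update_of_ne h] using hcF s
  have hbF : b ∈ SE F := by
    intro s
    by_cases h : s = t
    · subst h; simpa [hb, Function.update_self] using hy
    · simpa [hb, Function.update_of_ne h] using hcF s
  have hab : a ≠ b := by
    intro h
    apply hxy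
    have := congrFun h t
    simpa [ha, hb, Function.update_self] using this
  obtain ⟨H, hH, K, hK, haH, hbK, hdisj⟩ := hT2 a haF b hbF hab
  refine ⟨H t, ⟨H, hH, rfl⟩, K t, ⟨K, hK, rfl⟩, ?_, ?_, ?_⟩
  · simpa [ha, Function.update_self] using haH t
  · simpa [hb, Function.update_self] using hbK t
  · ext z
    simp only [Set.mem_inter_iff, Set.mem_empty_iff_false, iff_false, not_and]
    intro hzH hzK
    have hcontra : Function.update c t z ∈ SE H ∩ SE K := by
      constructor
      · intro s
        by_cases h : s = t
        · subst h; simpa [Function.update_self] using hzH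
        · have := haH s
          rw [ha, Function.update_of_ne h] at this
          simpa [Function.update_of_ne h] using this
      · intro s
        by_cases h : s = t
        · subst h; simpa [Function.update_self] using hzK
        · have := hbK s
          rw [hb, Function.update_of_ne h] at this
          simpa [Function.update_of_ne h] using this
    rw [hdisj] at hcontra
    exact hcontra
end

section
/- Let (F, τ₁, τ₂) be a canonical soft bitopological space over X with parameter set A. If for every t ∈ A the bitopological space (F t, (τ₁)_t, (τ₂)_t) is pairwise T0 (for all x ≠ y in F t there is U ∈ (τ₁)_t ∪ (τ₂)_t containing exactly one of x and y), then (F, τ₁, τ₂) is pairwise soft T0. -/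
variable {A X : Type*}

/-- A soft topology is canonical if it contains every soft subset all of whose sections are
open in the corresponding component topologies. -/
def Canonical {A X : Type*} (F : A → Set X) (τ : Set (A → Set X)) : Prop :=
  ∀ H : A → Set X, SoftSubset F H → (∀ t, H t ∈ compTop τ t) → H ∈ τ


lemma aux_mem {A X : Type*} [DecidableEq A] (F : A → Set X) (τ : Set (A → Set X))
    (h1 : IsSoftTopology F τ) (hc : Canonical F τ) (t0 : A) (U : Set X)
    (hU : U ∈ compTop τ t0) :
    (fun t => if t = t0 then U else F t) ∈ τ := by
  obtain ⟨H', hH', hH't⟩ := hU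
  apply hc
  · intro t x hx
    by_cases ht : t = t0
    · subst ht; simp only [if_pos rfl] at hx
      exact h1.1 H' hH' t (by rw [show U = H' t from hH't.symm] at hx; exact hx)
    · simpa [ht] using hx
  · intro t
    by_cases ht : t = t0
    · subst ht; simpa using ⟨H', hH', hH't⟩
    · simp only [if_neg ht]; exact ⟨F, h1.2.2.1, rfl⟩

/-- for canonical soft bitopologies, pairwise T0 slices give pairwise soft T0. -/
theorem pairwiseSoftT0_of_slices_pairwiseT0 [Nonempty A] [Nonempty X]
    (F : A → Set X) (τ1 τ2 : Set (A → Set X))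
    (h1 : IsSoftTopology F τ1) (h2 : IsSoftTopology F τ2)
    (hc1 : Canonical F τ1) (hc2 : Canonical F τ2)
    (h : ∀ t : A, ∀ x ∈ F t, ∀ y ∈ F t, x ≠ y →
      ∃ U ∈ compTop τ1 t ∪ compTop τ2 t, (x ∈ U ∧ y ∉ U) ∨ (y ∈ U ∧ x ∉ U)) :
    PairwiseSoftT0 F τ1 τ2 := by
  classical
  intro a ha b hb hab
  obtain ⟨t0, ht0⟩ : ∃ t, a t ≠ b t := by
    by_contra hcon
    push_neg at hcon
    exact hab (funext hcon)
  obtain ⟨U, hUmem, hU⟩ := h t0 (a t0) (ha t0) (b t0) (hb t0) ht0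
  have key : ∀ τ, IsSoftTopology F τ → Canonical F τ → U ∈ compTop τ t0 →
      ∃ H ∈ τ, (memS a H ∧ ¬ memS b H) ∨ (memS b H ∧ ¬ memS a H) := by
    intro τ hτ hcτ hUτ
    refine ⟨_, aux_mem F τ hτ hcτ t0 U hUτ, ?_⟩
    have mem : ∀ c : A → X, c ∈ SE F →
        (memS c (fun t => if t = t0 then U else F t) ↔ c t0 ∈ U) := by
      intro c hc
      constructor
      · intro hm; simpa using hm t0
      · intro hct t
        by_cases ht : t = t0
        · subst ht; simpa using hct
        · simpa [ht] using hc t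
    rcases hU with ⟨hx, hy⟩ | ⟨hy, hx⟩
    · exact Or.inl ⟨(mem a ha).2 hx, fun hm => hy ((mem b hb).1 hm)⟩
    · exact Or.inr ⟨(mem b hb).2 hy, fun hm => hx ((mem a ha).1 hm)⟩
  rcases hUmem with hUτ | hUτ
  · obtain ⟨H, hH, hsep⟩ := key τ1 h1 hc1 hUτ
    exact ⟨H, Or.inl hH, hsep⟩
  · obtain ⟨H, hH, hsep⟩ := key τ2 h2 hc2 hUτ
    exact ⟨H, Or.inr hH, hsep⟩
end

section
/- Let (F, τ₁, τ₂) be a canonical soft bitopological space over X with parameter set A. If for every t ∈ A the bitopological space (F t, (τ₁)_t, (τ₂)_t) is pairwise T1 (for all x ≠ y in F t there exist U ∈ (τ₁)_t and V ∈ (τ₂)_t with x ∈ U, y ∉ U, y ∈ V, x ∉ V), then (F, τ₁, τ₂) is pairwise soft T1. -/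
variable {A X : Type*}

/-- for canonical soft bitopologies, pairwise T1 slices give pairwise soft T1. -/
theorem pairwiseSoftT1_of_slices_pairwiseT1 [Nonempty A] [Nonempty X]
    (F : A → Set X) (τ1 τ2 : Set (A → Set X))
    (h1 : IsSoftTopology F τ1) (h2 : IsSoftTopology F τ2)
    (hc1 : Canonical F τ1) (hc2 : Canonical F τ2)
    (h : ∀ t : A, ∀ x ∈ F t, ∀ y ∈ F t, x ≠ y →
      ∃ U ∈ compTop τ1 t, ∃ V ∈ compTop τ2 t, x ∈ U ∧ y ∉ U ∧ y ∈ V ∧ x ∉ V) :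
    PairwiseSoftT1 F τ1 τ2 := by
  intro a ha b hb hab
  obtain ⟨t0, ht0⟩ := Function.ne_iff.mp hab
  obtain ⟨U, hU, V, hV, haU, hbU, hbV, haV⟩ := h t0 (a t0) (ha t0) (b t0) (hb t0) ht0
  classical
  set H : A → Set X := fun t => if t = t0 then U else F t with hHdef
  set K : A → Set X := fun t => if t = t0 then V else F t with hKdef
  have hUsub : U ⊆ F t0 := by
    obtain ⟨G, hG, rfl⟩ := hU
    exact h1.1 G hG t0
  have hVsub : V ⊆ F t0 := by
    obtain ⟨G, hG, rfl⟩ := hV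
    exact h2.1 G hG t0
  have hHτ : H ∈ τ1 := by
    apply hc1
    · intro t x hx
      simp only [hHdef] at hx
      split_ifs at hx with ht
      · subst ht; exact hUsub hx
      · exact hx
    · intro t
      by_cases ht : t = t0
      · subst ht; simpa [hHdef] using hU
      · simp only [hHdef, if_neg ht]
        exact ⟨F, h1.2.2.1, rfl⟩
  have hKτ : K ∈ τ2 := by
    apply hc2
    · intro t x hx
      simp only [hKdef] at hx
      split_ifs at hx with ht
      · subst ht; exact hVsub hx
      · exact hx
    · intro t
      by_cases ht : t = t0
      · subst ht; simpa [hKdef] using hV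
      · simp only [hKdef, if_neg ht]
        exact ⟨F, h2.2.2.1, rfl⟩
  refine ⟨H, hHτ, K, hKτ, ?_, ?_, ?_, ?_⟩
  · intro t
    by_cases ht : t = t0
    · subst ht; simpa [hHdef] using haU
    · simpa [hHdef, if_neg ht] using ha t
  · intro hmem
    have := hmem t0
    simp [hHdef] at this
    exact hbU this
  · intro t
    by_cases ht : t = t0
    · subst ht; simpa [hKdef] using hbV
    · simpa [hKdef, if_neg ht] using hb t
  · intro hmem
    have := hmem t0
    simp [hKdef] at this
    exact haV this
end

section
/- Let (F, τ₁, τ₂) be a canonical soft bitopological space over X with parameter set A. If for every t ∈ A the bitopological space (F t, (τ₁)_t, (τ₂)_t) is pairwise T2 (for all x ≠ y in F t there exist U ∈ (τ₁)_t and V ∈ (τ₂)_t with x ∈ U, y ∈ V, and U ∩ V = ∅), then (F, τ₁, τ₂) is pairwise soft T2. -/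
variable {A X : Type*}

/-- for canonical soft bitopologies, pairwise T2 slices give pairwise soft T2. -/
theorem pairwiseSoftT2_of_slices_pairwiseT2 [Nonempty A] [Nonempty X]
    (F : A → Set X) (τ1 τ2 : Set (A → Set X))
    (h1 : IsSoftTopology F τ1) (h2 : IsSoftTopology F τ2)
    (hc1 : Canonical F τ1) (hc2 : Canonical F τ2)
    (h : ∀ t : A, ∀ x ∈ F t, ∀ y ∈ F t, x ≠ y →
      ∃ U ∈ compTop τ1 t, ∃ V ∈ compTop τ2 t, x ∈ U ∧ y ∈ V ∧ U ∩ V = ∅) :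
    PairwiseSoftT2 F τ1 τ2 := by
  intro a ha b hb hab
  classical
  obtain ⟨t0, ht0⟩ : ∃ t, a t ≠ b t := by
    by_contra hno
    push_neg at hno
    exact hab (funext hno)
  obtain ⟨U, hU, V, hV, haU, hbV, hUV⟩ := h t0 (a t0) (ha t0) (b t0) (hb t0) ht0
  set H : A → Set X := fun t => if t = t0 then U else F t with hHdef
  set K : A → Set X := fun t => if t = t0 then V else F t with hKdef
  obtain ⟨H0, hH0, hH0e⟩ := hU
  obtain ⟨K0, hK0, hK0e⟩ := hV
  have hUsub : U ⊆ F t0 := hH0e ▸ h1.1 H0 hH0 t0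
  have hVsub : V ⊆ F t0 := hK0e ▸ h2.1 K0 hK0 t0
  have hHmem : H ∈ τ1 := by
    apply hc1
    · intro t
      by_cases ht : t = t0
      · subst ht; simpa [H] using hUsub
      · simp [H, ht]
    · intro t
      by_cases ht : t = t0
      · subst ht; simpa [H] using ⟨H0, hH0, hH0e⟩
      · exact ⟨F, h1.2.2.1, by simp [H, ht]⟩
  have hKmem : K ∈ τ2 := by
    apply hc2
    · intro t
      by_cases ht : t = t0
      · subst ht; simpa [K] using hVsub
      · simp [K, ht]
    · intro t
      by_cases ht : t = t0
      · subst ht; simpa [K] using ⟨K0, hK0, hK0e⟩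
      · exact ⟨F, h2.2.2.1, by simp [K, ht]⟩
  refine ⟨H, hHmem, K, hKmem, ?_, ?_, ?_⟩
  · intro t
    by_cases ht : t = t0
    · subst ht; simpa [H]
    · simpa [H, ht] using ha t
  · intro t
    by_cases ht : t = t0
    · subst ht; simpa [K]
    · simpa [K, ht] using hb t
  · ext c
    simp only [Set.mem_inter_iff, Set.mem_empty_iff_false, iff_false]
    rintro ⟨hcH, hcK⟩
    have h1' := hcH t0
    have h2' := hcK t0
    simp only [H, K, if_pos rfl] at h1' h2'
    have : c t0 ∈ U ∩ V := ⟨h1', h2'⟩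
    rw [hUV] at this
    exact this
end

section
/- Let (F, τ₁, τ₂) be a canonical soft bitopological space over X with parameter set A, and let H be a soft subset of F. If H is pairwise soft compact in (F, τ₁, τ₂), then for every t ∈ A the set H t is pairwise compact in (F t, (τ₁)_t, (τ₂)_t): every cover of H t by sets belonging to (τ₁)_t ∪ (τ₂)_t admits a finite subcover. -/
variable {A X : Type*}

/-- `H` is pairwise soft compact: every pairwise soft open cover has a finite subcover. -/
def PairwiseSoftCompact {A X : Type*} (τ1 τ2 : Set (A → Set X)) (H : A → Set X) : Prop :=
  ∀ C : Set (A → Set X), C ⊆ τ1 ∪ τ2 → (∀ t, H t ⊆ ⋃ G ∈ C, G t) →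
    ∃ C0 ⊆ C, C0.Finite ∧ ∀ t, H t ⊆ ⋃ G ∈ C0, G t

/-- for canonical soft bitopologies, pairwise soft compactness of `H` implies
pairwise compactness of every section `H t`. -/
theorem slices_pairwiseCompact_of_pairwiseSoftCompact [Nonempty A] [Nonempty X]
    (F : A → Set X) (τ1 τ2 : Set (A → Set X))
    (h1 : IsSoftTopology F τ1) (h2 : IsSoftTopology F τ2)
    (hc1 : Canonical F τ1) (hc2 : Canonical F τ2)
    (H : A → Set X) (hH : SoftSubset F H)
    (hcomp : PairwiseSoftCompact τ1 τ2 H) (t : A) :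
    ∀ 𝒰 : Set (Set X), 𝒰 ⊆ compTop τ1 t ∪ compTop τ2 t → H t ⊆ ⋃₀ 𝒰 →
      ∃ 𝒰0 ⊆ 𝒰, 𝒰0.Finite ∧ H t ⊆ ⋃₀ 𝒰0 := by
  classical
  intro U hUsub hUcov
  rcases U.eq_empty_or_nonempty with rfl | hne
  · exact ⟨∅, by simp, Set.finite_empty, by simpa using hUcov⟩
  -- lift each u ∈ U to a soft set
  set lift : Set X → (A → Set X) := fun u => fun s => if s = t then u else F s with hlift
  have hliftt : ∀ u, lift u t = u := fun u => by simp [hlift]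
  have hmem : ∀ u ∈ U, lift u ∈ τ1 ∪ τ2 := by
    intro u hu
    rcases hUsub hu with hu1 | hu1
    · left
      apply hc1 (lift u)
      · intro s x hx
        simp only [hlift] at hx
        split_ifs at hx with h
        · subst h
          rcases hu1 with ⟨G, hG, rfl⟩
          exact h1.1 G hG s hx
        · exact hx
      · intro s
        by_cases h : s = t
        · subst h; simpa [hlift] using hu1
        · have : F s ∈ compTop τ1 s := ⟨F, h1.2.2.1, rfl⟩
          simpa [hlift, h] using this
    · right
      apply hc2 (lift u)
      · intro s x hx
        simp only [hlift] at hx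
        split_ifs at hx with h
        · subst h
          rcases hu1 with ⟨G, hG, rfl⟩
          exact h2.1 G hG s hx
        · exact hx
      · intro s
        by_cases h : s = t
        · subst h; simpa [hlift] using hu1
        · have : F s ∈ compTop τ2 s := ⟨F, h2.2.2.1, rfl⟩
          simpa [hlift, h] using this
  have hcov : ∀ s, H s ⊆ ⋃ G ∈ lift '' U, G s := by
    intro s x hx
    by_cases h : s = t
    · subst h
      rcases hUcov hx with ⟨u, hu, hxu⟩
      exact Set.mem_biUnion ⟨u, hu, rfl⟩ (by simpa [hlift] using hxu)
    · rcases hne with ⟨u, hu⟩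
      exact Set.mem_biUnion ⟨u, hu, rfl⟩ (by simpa [hlift, h] using hH s hx)
  obtain ⟨C0, hC0sub, hC0fin, hC0cov⟩ := hcomp (lift '' U)
    (by rintro G ⟨u, hu, rfl⟩; exact hmem u hu) hcov
  refine ⟨(fun G => G t) '' C0, ?_, hC0fin.image _, ?_⟩
  · rintro v ⟨G, hG, rfl⟩
    rcases hC0sub hG with ⟨u, hu, rfl⟩
    simpa [hlift] using hu
  · intro x hx
    have h' := hC0cov t hx
    simp only [Set.mem_iUnion, exists_prop] at h'
    rcases h' with ⟨G, hG, hxG⟩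
    exact ⟨G t, ⟨G, hG, rfl⟩, hxG⟩
end

section
/- Let A be a finite nonempty parameter set, (F, τ₁, τ₂) a soft bitopological space over X, and H a soft subset of F. If for every t ∈ A the set H t is pairwise compact in (F t, (τ₁)_t, (τ₂)_t) (every cover of H t by sets from (τ₁)_t ∪ (τ₂)_t has a finite subcover), then H is pairwise soft compact in (F, τ₁, τ₂). -/
variable {A X : Type*}

/-- over a finite parameter set, if every section of `H` is pairwise compact,
then `H` is pairwise soft compact. -/
theorem pairwiseSoftCompact_of_slices_pairwiseCompact [Nonempty A] [Finite A] [Nonempty X]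
    (F : A → Set X) (τ1 τ2 : Set (A → Set X))
    (h1 : IsSoftTopology F τ1) (h2 : IsSoftTopology F τ2)
    (H : A → Set X) (hH : SoftSubset F H)
    (h : ∀ t : A, ∀ 𝒰 : Set (Set X), 𝒰 ⊆ compTop τ1 t ∪ compTop τ2 t → H t ⊆ ⋃₀ 𝒰 →
      ∃ 𝒰0 ⊆ 𝒰, 𝒰0.Finite ∧ H t ⊆ ⋃₀ 𝒰0) :
    PairwiseSoftCompact τ1 τ2 H := by
  intro C hC hcov
  have key : ∀ t : A, ∃ Ct : Set (A → Set X), Ct ⊆ C ∧ Ct.Finite ∧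
      H t ⊆ ⋃ G ∈ Ct, G t := by
    intro t
    obtain ⟨𝒰0, h𝒰0sub, h𝒰0fin, h𝒰0cov⟩ := h t ((fun G => G t) '' C)
      (by
        rintro _ ⟨G, hG, rfl⟩
        rcases hC hG with hG1 | hG1
        · exact Or.inl ⟨G, hG1, rfl⟩
        · exact Or.inr ⟨G, hG1, rfl⟩)
      (by
        refine (hcov t).trans ?_
        intro x hx
        simp only [Set.mem_iUnion] at hx
        obtain ⟨G, hG, hx⟩ := hx
        exact ⟨G t, ⟨G, hG, rfl⟩, hx⟩)
    choose f hf1 hf2 using fun U (hU : U ∈ 𝒰0) => h𝒰0sub hU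
    refine ⟨{G | ∃ U hU, f U hU = G}, ?_, ?_, ?_⟩
    · rintro _ ⟨U, hU, rfl⟩; exact hf1 U hU
    · exact h𝒰0fin.dependent_image f
    · intro x hx
      obtain ⟨U, hU, hxU⟩ := h𝒰0cov hx
      have : x ∈ f U hU t := by rw [show f U hU t = U from hf2 U hU]; exact hxU
      exact Set.mem_biUnion ⟨U, hU, rfl⟩ this
  choose Ct hsub hfin hcov2 using key
  refine ⟨⋃ t, Ct t, Set.iUnion_subset hsub, Set.finite_iUnion hfin, ?_⟩
  intro t x hx
  obtain ⟨G, hG, hxG⟩ := by simpa using hcov2 t hx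
  exact Set.mem_biUnion (Set.mem_iUnion.2 ⟨t, hG⟩) hxG
end

section
/- Let (F, τ₁, τ₂) be a soft bitopological space over X with parameter set A. If (F, τ₁, τ₂) is pairwise soft T2, then the induced structures on SE(F) separate points in the pairwise Hausdorff sense: for all a, b ∈ SE(F) with a ≠ b there exist subsets T, S ⊆ SE(F) such that a ∈ T, b ∈ S, T ∩ S = ∅, and for every t ∈ A the section { c t : c ∈ T } belongs to the component family (τ₁)_t and the section { c t : c ∈ S } belongs to the component family (τ₂)_t. -/
variable {A X : Type*}

/-- pairwise soft T2 yields pairwise Hausdorff separation of soft elements by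
subsets of `SE F` all of whose sections are open in the respective component topologies. -/
theorem induced_pairwise_hausdorff_of_pairwiseSoftT2 [Nonempty A] [Nonempty X]
    (F : A → Set X) (τ1 τ2 : Set (A → Set X))
    (h1 : IsSoftTopology F τ1) (h2 : IsSoftTopology F τ2)
    (hT2 : PairwiseSoftT2 F τ1 τ2) :
    ∀ a ∈ SE F, ∀ b ∈ SE F, a ≠ b →
      ∃ T S : Set (A → X), T ⊆ SE F ∧ S ⊆ SE F ∧ a ∈ T ∧ b ∈ S ∧ T ∩ S = ∅ ∧
        (∀ t, (fun c : A → X => c t) '' T ∈ compTop τ1 t) ∧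
        (∀ t, (fun c : A → X => c t) '' S ∈ compTop τ2 t) := by
  classical
  intro a ha b hb hab
  obtain ⟨H, hH1, K, hK2, haH, hbK, hdisj⟩ := hT2 a ha b hb hab
  have hsec : ∀ (H : A → Set X) (a : A → X), memS a H →
      ∀ t, (fun c : A → X => c t) '' SE H = H t := by
    intro H a haH t
    ext x
    constructor
    · rintro ⟨c, hc, rfl⟩; exact hc t
    · intro hx
      exact ⟨Function.update a t x, fun s => by
        by_cases hs : s = t
        · subst hs; simpa using hx
        · simpa [Function.update_of_ne hs] using haH s, by simp⟩
  refine ⟨SE H, SE K, fun c hc t => h1.1 H hH1 t (hc t),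
    fun c hc t => h2.1 K hK2 t (hc t), haH, hbK, hdisj,
    fun t => ?_, fun t => ?_⟩
  · rw [hsec H a haH t]; exact ⟨H, hH1, rfl⟩
  · rw [hsec K b hbK t]; exact ⟨K, hK2, rfl⟩
end
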